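/- A second-order operator Δ̂ on the algebra of densities of the form Δ̂ = S^{ij}∂_i∂_j + λ̂ B^i ∂_i + λ̂² C + D^i ∂_i + λ̂ E + F (with S^{ij} symmetric) is self-adjoint (Δ̂* = Δ̂) if and only if it can be written as Δ̂ = S^{ij}∂_i∂_j + ∂_j S^{ji}∂_i + (2λ̂-1)γ^i∂_i + λ̂ ∂_iγ^i + λ̂(λ̂-1)θ + F for the functions γ^i = B^i/2 and θ = C, i.e. if and only if D^i = ∂_j S^{ji} - γ^i and E = ∂_i γ^i - θ, where γ^i = B^i/2 and θ = C. -/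

import Mathlib

/-- Partial derivative of a function on `ℝ^m` in the `i`-th coordinate direction. -/
noncomputable def pd {m : ℕ} (i : Fin m) (f : (Fin m → ℝ) → ℝ) : (Fin m → ℝ) → ℝ :=
  fun x => fderiv ℝ f x (Pi.single i 1)


lemma pd_smooth {m : ℕ} (i : Fin m) {f : (Fin m → ℝ) → ℝ} (hf : ContDiff ℝ (⊤ : ℕ∞) f) :
    ContDiff ℝ (⊤ : ℕ∞) (pd i f) :=
  (hf.fderiv_right (m := (⊤:ℕ∞)) (by exact_mod_cast le_top)).clm_apply contDiff_const

lemma cd_diffAt {m : ℕ} {f : (Fin m → ℝ) → ℝ} (hf : ContDiff ℝ (⊤ : ℕ∞) f) (x : Fin m → ℝ) :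
    DifferentiableAt ℝ f x :=
  (hf.differentiable (by simp)).differentiableAt

lemma pd_sub {m : ℕ} (i : Fin m) {f g : (Fin m → ℝ) → ℝ} {x : Fin m → ℝ}
    (hf : DifferentiableAt ℝ f x) (hg : DifferentiableAt ℝ g x) :
    pd i (fun y => f y - g y) x = pd i f x - pd i g x := by
  unfold pd; rw [fderiv_fun_sub hf hg]; rfl

lemma pd_sum {m : ℕ} (i : Fin m) {ι : Type*} (s : Finset ι) {f : ι → (Fin m → ℝ) → ℝ}
    {x : Fin m → ℝ} (hf : ∀ j ∈ s, DifferentiableAt ℝ (f j) x) :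
    pd i (fun y => ∑ j ∈ s, f j y) x = ∑ j ∈ s, pd i (f j) x := by
  unfold pd; rw [fderiv_fun_sum hf]; simp

lemma pd_div2 {m : ℕ} (i : Fin m) {f : (Fin m → ℝ) → ℝ} {x : Fin m → ℝ}
    (hf : DifferentiableAt ℝ f x) :
    pd i (fun y => f y / 2) x = pd i f x / 2 := by
  have : (fun y => f y / 2) = fun y => (2:ℝ)⁻¹ * f y := by funext y; ring
  rw [this]; unfold pd; rw [fderiv_const_mul hf]; simp; ring

/-- A second-order operator `Δ̂ = S^{ij}∂_i∂_j + λ̂ B^i∂_i + λ̂²C + D^i∂_i + λ̂E + F` on the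
algebra of densities, encoded by its coefficients `(S,B,C,D,E,F)`.  Its adjoint, computed
from `(∂_i)* = -∂_i`, `λ̂* = 1-λ̂`, `f* = f`, has coefficients
`(S, B, C, 2∂_jS^{ji} - B^i - D^i, ∂_iB^i - 2C - E, ∂_i∂_jS^{ij} - ∂_iB^i + C - ∂_iD^i + E + F)`.
`Δ̂` is self-adjoint iff `D^i = ∂_jS^{ji} - γ^i` and `E = ∂_iγ^i - θ`, where `γ^i = B^i/2`
and `θ = C`. -/
theorem stmt_9 (m : ℕ) (S : Fin m → Fin m → (Fin m → ℝ) → ℝ)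
    (B D : Fin m → (Fin m → ℝ) → ℝ) (C E F : (Fin m → ℝ) → ℝ)
    (hSsymm : ∀ i j, S i j = S j i)
    (hS : ∀ i j, ContDiff ℝ (⊤ : ℕ∞) (S i j)) (hB : ∀ i, ContDiff ℝ (⊤ : ℕ∞) (B i))
    (hC : ContDiff ℝ (⊤ : ℕ∞) C) (hD : ∀ i, ContDiff ℝ (⊤ : ℕ∞) (D i))
    (hE : ContDiff ℝ (⊤ : ℕ∞) E) (hF : ContDiff ℝ (⊤ : ℕ∞) F) :
    (((S, B, C,
        fun (i : Fin m) x => (2 * ∑ j, pd j (S j i) x) - B i x - D i x,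
        fun x => (∑ i, pd i (B i) x) - 2 * C x - E x,
        fun x => (∑ i, ∑ j, pd i (pd j (S i j)) x) - (∑ i, pd i (B i) x) + C x -
          (∑ i, pd i (D i) x) + E x + F x) :
        (Fin m → Fin m → (Fin m → ℝ) → ℝ) × (Fin m → (Fin m → ℝ) → ℝ) ×
          ((Fin m → ℝ) → ℝ) × (Fin m → (Fin m → ℝ) → ℝ) × ((Fin m → ℝ) → ℝ) ×
          ((Fin m → ℝ) → ℝ)) = (S, B, C, D, E, F)) ↔
      ((∀ i x, D i x = (∑ j, pd j (S j i) x) - B i x / 2) ∧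
        (∀ x, E x = (∑ i, pd i (fun y => B i y / 2) x) - C x)) := by
  have hsumB : ∀ x : Fin m → ℝ,
      ∑ i, pd i (fun y => B i y / 2) x = (∑ i, pd i (B i) x) / 2 := by
    intro x
    rw [Finset.sum_div]
    exact Finset.sum_congr rfl fun i _ => pd_div2 i (cd_diffAt (hB i) x)
  simp only [Prod.mk.injEq, true_and]
  constructor
  · rintro ⟨h1, h2, -⟩
    constructor
    · intro i x
      have := congrFun (congrFun h1 i) x
      linarith
    · intro x
      have := congrFun h2 x

      rw [hsumB]; linarith
  · rintro ⟨h1, h2⟩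
    have hDeq : ∀ i, D i = fun y => (∑ j, pd j (S j i) y) - B i y / 2 := by
      intro i; funext y; exact h1 i y
    refine ⟨?_, ?_, ?_⟩
    · funext i x
      have := h1 i x
      linarith
    · funext x
      have := h2 x
      rw [hsumB] at this; linarith
    · funext x
      have hpdD : ∀ i, pd i (D i) x =
          (∑ j, pd i (pd j (S i j)) x) - pd i (B i) x / 2 := by
        intro i
        rw [hDeq i,
          pd_sub i
            (cd_diffAt (ContDiff.sum fun j _ => pd_smooth j (hS j i)) x)
            (cd_diffAt ((hB i).div_const 2) x),
          pd_sum i Finset.univ (fun j _ => cd_diffAt (pd_smooth j (hS j i)) x),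
          pd_div2 i (cd_diffAt (hB i) x)]
        congr 1
        exact Finset.sum_congr rfl fun j _ => by rw [hSsymm j i]
      rw [Finset.sum_congr rfl fun i _ => hpdD i, Finset.sum_sub_distrib,
        ← Finset.sum_div, h2 x, hsumB]
      ring
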